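/- arXiv:2110.13969 — 2 statements merged into one kernel-verified Lean document; each statement's English description precedes it below -/
import Mathlib

section
/- Let a, b, d̂, d̃ be nonnegative reals. If |d̂² − d̃²| ≤ a·d̃ + b, then |d̂ − d̃| ≤ 3·max(a, √b). -/
theorem stmt_0 (a b dhat dtil : ℝ) (ha : 0 ≤ a) (hb : 0 ≤ b)
    (hdhat : 0 ≤ dhat) (hdtil : 0 ≤ dtil)
    (h : |dhat ^ 2 - dtil ^ 2| ≤ a * dtil + b) :
    |dhat - dtil| ≤ 3 * max a (Real.sqrt b) := by
  set M := max a (Real.sqrt b) with hM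
  have hsb : 0 ≤ Real.sqrt b := Real.sqrt_nonneg b
  have hM0 : 0 ≤ M := le_trans ha (le_max_left _ _)
  have haM : a ≤ M := le_max_left _ _
  have hbM : Real.sqrt b ≤ M := le_max_right _ _
  have hsq : Real.sqrt b ^ 2 = b := Real.sq_sqrt hb
  have hbM2 : b ≤ M ^ 2 := by nlinarith
  rw [abs_le] at h
  rw [abs_le]
  rcases le_or_gt dtil M with hc | hc
  · have hdh : dhat ≤ 2 * M := by nlinarith
    constructor <;> nlinarith
  · have hkey : dhat ^ 2 - dtil ^ 2 ≤ 2 * M * dtil := by nlinarith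
    have hkey2 : dtil ^ 2 - dhat ^ 2 ≤ 2 * M * dtil := by nlinarith
    constructor
    · nlinarith [sq_nonneg (dhat - dtil), sq_nonneg (dhat + dtil)]
    · nlinarith [sq_nonneg (dhat - dtil), mul_nonneg hdhat hdtil]
end

section
/- Suppose d̃ ≤ √b where d̂, d̃, a, b ≥ 0 and |d̂² − d̃²| ≤ a·d̃ + b. Then |d̂ − d̃| ≤ (1 + √3)·max(a, √b). -/
theorem stmt_1 (a b dhat dtil : ℝ) (ha : 0 ≤ a) (hb : 0 ≤ b)
    (hdhat : 0 ≤ dhat) (hdtil : 0 ≤ dtil)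
    (h : |dhat ^ 2 - dtil ^ 2| ≤ a * dtil + b)
    (hcase : dtil ≤ Real.sqrt b) :
    |dhat - dtil| ≤ (1 + Real.sqrt 3) * max a (Real.sqrt b) := by
  set M := max a (Real.sqrt b) with hMdef
  have hsb : 0 ≤ Real.sqrt b := Real.sqrt_nonneg b
  have hM0 : 0 ≤ M := le_trans hsb (le_max_right _ _)
  have haM : a ≤ M := le_max_left _ _
  have hbM : Real.sqrt b ≤ M := le_max_right _ _
  have hdtM : dtil ≤ M := hcase.trans hbM
  have hbsq : b ≤ M ^ 2 := by
    have := Real.sq_sqrt hb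
    nlinarith [Real.sqrt_nonneg b]
  have h1 : dhat ^ 2 - dtil ^ 2 ≤ a * dtil + b := (abs_le.mp h).2
  have hdh2 : dhat ^ 2 ≤ 3 * M ^ 2 := by nlinarith
  have h3 : (0:ℝ) ≤ Real.sqrt 3 := Real.sqrt_nonneg 3
  have hdh : dhat ≤ Real.sqrt 3 * M := by
    have : dhat = Real.sqrt (dhat ^ 2) := (Real.sqrt_sq hdhat).symm
    rw [this]
    have : Real.sqrt (dhat ^ 2) ≤ Real.sqrt (3 * M ^ 2) := Real.sqrt_le_sqrt hdh2
    calc Real.sqrt (dhat ^ 2) ≤ Real.sqrt (3 * M ^ 2) := this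
      _ = Real.sqrt 3 * M := by
          rw [Real.sqrt_mul (by norm_num), Real.sqrt_sq hM0]
  rw [abs_sub_le_iff]
  constructor <;> nlinarith
end
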